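/- arXiv:1910.11422 — 2 statements merged into one kernel-verified Lean document; each statement's English description precedes it below -/
import Mathlib

section
/- Let (Ω, 𝓕) be a measurable space and let μ and ν be probability measures on Ω with ν absolutely continuous with respect to μ. Then for every measurable function g : Ω → ℝ such that e^g is μ-integrable and g is ν-integrable, one has ∫ g dν − log(∫ e^g dμ) ≤ D_KL(ν‖μ), where D_KL denotes the Kullback–Leibler divergence. -/
open MeasureTheory
open scoped Classical

/-!
Tilting `μ` by `g` gives the probability measure `μ_g = e^g / (∫ e^g dμ) · μ`, and
`log (dν/dμ_g) = log (dν/dμ) - g + log ∫ e^g dμ`. Integrating against `ν`, the defect in the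
Donsker–Varadhan inequality is exactly `D_KL(ν‖μ_g)`, which is nonnegative by Gibbs' inequality.
-/

/-- The Kullback–Leibler divergence `D_KL(ν‖μ) = ∫ log(dν/dμ) dν` when `ν ≪ μ`
(and the log-density ratio is integrable), and `+∞` otherwise, as an extended real. -/
noncomputable def klDiv {Ω : Type*} [MeasurableSpace Ω] (ν μ : Measure Ω) : EReal :=
  if ν ≪ μ ∧ Integrable (fun x => Real.log ((ν.rnDeriv μ) x).toReal) ν then
    ((∫ x, Real.log ((ν.rnDeriv μ) x).toReal ∂ν : ℝ) : EReal)
  else ⊤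

namespace MeasureTheory

variable {Ω : Type*} [MeasurableSpace Ω] {μ ν : Measure Ω}

lemma integral_llr_nonneg [IsProbabilityMeasure μ] [IsProbabilityMeasure ν]
    (hac : ν ≪ μ) (hint : Integrable (llr ν μ) ν) : 0 ≤ ∫ x, llr ν μ x ∂ν := by
  simpa using InformationTheory.integral_llr_add_sub_measure_univ_nonneg hac hint

lemma integral_sub_log_integral_exp_le_integral_llr [IsProbabilityMeasure μ]
    [IsProbabilityMeasure ν] (hac : ν ≪ μ) {g : Ω → ℝ}
    (hexp : Integrable (fun x => Real.exp (g x)) μ) (hgi : Integrable g ν)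
    (hint : Integrable (llr ν μ) ν) :
    ∫ x, g x ∂ν - Real.log (∫ x, Real.exp (g x) ∂μ) ≤ ∫ x, llr ν μ x ∂ν := by
  have := isProbabilityMeasure_tilted hexp
  have hac_tilted : ν ≪ μ.tilted g := hac.trans (absolutelyContinuous_tilted hexp)
  have hgibbs := integral_llr_nonneg hac_tilted (integrable_llr_tilted_right hac hgi hint hexp)
  rw [integral_llr_tilted_right hac hgi hexp hint] at hgibbs
  linarith

end MeasureTheory

theorem donsker_varadhan_lower_bound_general {Ω : Type*} [MeasurableSpace Ω]
    (μ ν : Measure Ω) [IsProbabilityMeasure μ] [IsProbabilityMeasure ν]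
    (hac : ν ≪ μ) (g : Ω → ℝ)
    (hexp : Integrable (fun x => Real.exp (g x)) μ)
    (hgi : Integrable g ν) :
    ((∫ x, g x ∂ν - Real.log (∫ x, Real.exp (g x) ∂μ) : ℝ) : EReal) ≤ klDiv ν μ := by
  by_cases hint : Integrable (llr ν μ) ν
  · rw [klDiv, if_pos ⟨hac, hint⟩, EReal.coe_le_coe_iff]
    exact integral_sub_log_integral_exp_le_integral_llr hac hexp hgi hint
  · rw [klDiv, if_neg fun h => hint h.2]
    exact le_top

/-- Donsker–Varadhan lower bound: for probability measures `ν ≪ μ` and any measurable `g`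
with `e^g` μ-integrable and `g` ν-integrable,
`∫ g dν − log(∫ e^g dμ) ≤ D_KL(ν‖μ)`. -/
theorem donsker_varadhan_lower_bound {Ω : Type*} [MeasurableSpace Ω]
    (μ ν : Measure Ω) [IsProbabilityMeasure μ] [IsProbabilityMeasure ν]
    (hac : ν ≪ μ) (g : Ω → ℝ) (hg : Measurable g)
    (hexp : Integrable (fun x => Real.exp (g x)) μ)
    (hgi : Integrable g ν) :
    ((∫ x, g x ∂ν - Real.log (∫ x, Real.exp (g x) ∂μ) : ℝ) : EReal) ≤ klDiv ν μ :=
  donsker_varadhan_lower_bound_general μ ν hac g hexp hgi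
end

section
/- Let d > 0, let m ∈ ℝⁿ, and define G : ℝⁿ → ℝ by G(x) = exp(−‖x − m‖²/(2d²)). Then for every x ∈ ℝⁿ and every unit vector v ∈ ℝⁿ, the second derivative at t = 0 of the function t ↦ G(x + t·v) is at most 2/(d²·e^{3/2}); moreover 2/(d²·e^{3/2}) < 1/(2d²). -/
/-!
Along the line `t ↦ x + t • v` the Gaussian is `exp` of a quadratic polynomial in `t`, so its
second derivative at `0` is `exp (-s / 2) * (⟪x - m, v⟫² / d² - ‖v‖²) / d²` with
`s = ‖x - m‖² / d²`. Cauchy–Schwarz bounds this by `‖v‖² (s - 1) exp (-s / 2) / d²`, and the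
tangent line of `exp` at `3 / 2` gives `(s - 1) exp (-s / 2) ≤ 2 exp (-3 / 2)` for every real `s`.
-/

open Real
open scoped RealInnerProductSpace

theorem hasDerivAt_exp_quadratic (α β γ t : ℝ) :
    HasDerivAt (fun s => exp (α + β * s + γ * s ^ 2))
      ((β + 2 * γ * t) * exp (α + β * t + γ * t ^ 2)) t := by
  have hquad : HasDerivAt (fun s => α + β * s + γ * s ^ 2) (β + 2 * γ * t) t := by
    have hsum := (((hasDerivAt_id t).const_mul β).const_add α).fun_add
      ((hasDerivAt_pow 2 t).const_mul γ)
    exact hsum.congr_deriv (by norm_num; ring)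
  simpa only [mul_comm] using hquad.exp

theorem iteratedDeriv_two_exp_quadratic_zero (α β γ : ℝ) :
    iteratedDeriv 2 (fun t => exp (α + β * t + γ * t ^ 2)) 0 = (β ^ 2 + 2 * γ) * exp α := by
  have hderiv : deriv (fun t => exp (α + β * t + γ * t ^ 2))
      = fun t => (β + 2 * γ * t) * exp (α + β * t + γ * t ^ 2) :=
    funext fun t => (hasDerivAt_exp_quadratic α β γ t).deriv
  have hlin : HasDerivAt (fun t : ℝ => β + 2 * γ * t) (2 * γ) 0 := by
    simpa using ((hasDerivAt_id (0 : ℝ)).const_mul (2 * γ)).const_add β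
  rw [iteratedDeriv_succ, iteratedDeriv_one, hderiv,
    (hlin.fun_mul (hasDerivAt_exp_quadratic α β γ 0)).deriv]
  ring_nf

theorem sub_one_mul_exp_neg_half_le (s : ℝ) : (s - 1) * exp (-s / 2) ≤ 2 / exp (3 / 2) := by
  have htangent : s - 1 ≤ 2 * exp ((s - 3) / 2) := by
    linarith [add_one_le_exp ((s - 3) / 2)]
  calc (s - 1) * exp (-s / 2) ≤ 2 * exp ((s - 3) / 2) * exp (-s / 2) := by gcongr
    _ = 2 / exp (3 / 2) := by
      rw [mul_assoc, ← exp_add, div_eq_mul_inv 2, ← exp_neg]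
      ring_nf

theorem four_lt_exp_three_halves : 4 < exp (3 / 2) := by
  have hsplit : exp (3 / 2) = exp 1 * exp (1 / 2) := by rw [← exp_add]; norm_num
  have hhalf : 3 / 2 ≤ exp (1 / 2) := by linarith [add_one_le_exp (1 / 2 : ℝ)]
  rw [hsplit]
  nlinarith [exp_one_gt_d9]

section InnerProductSpace

variable {E : Type*} [NormedAddCommGroup E] [InnerProductSpace ℝ E]

theorem norm_add_smul_sq (u v : E) (t : ℝ) :
    ‖u + t • v‖ ^ 2 = ‖u‖ ^ 2 + 2 * ⟪u, v⟫ * t + ‖v‖ ^ 2 * t ^ 2 := by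
  rw [norm_add_sq_real, inner_smul_right, norm_smul, mul_pow, Real.norm_eq_abs, sq_abs]
  ring

theorem iteratedDeriv_two_gaussian_line_zero (u v : E) (d : ℝ) :
    iteratedDeriv 2 (fun t : ℝ => exp (-‖u + t • v‖ ^ 2 / (2 * d ^ 2))) 0
      = exp (-‖u‖ ^ 2 / (2 * d ^ 2)) * (⟪u, v⟫ ^ 2 / d ^ 4 - ‖v‖ ^ 2 / d ^ 2) := by
  have hquad : (fun t : ℝ => exp (-‖u + t • v‖ ^ 2 / (2 * d ^ 2))) = fun t =>
      exp (-‖u‖ ^ 2 / (2 * d ^ 2) + (-⟪u, v⟫ / d ^ 2) * t + (-‖v‖ ^ 2 / (2 * d ^ 2)) * t ^ 2) := by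
    funext t
    rw [norm_add_smul_sq]
    ring_nf
  rw [hquad, iteratedDeriv_two_exp_quadratic_zero]
  ring

theorem iteratedDeriv_two_gaussian_line_zero_le (u v : E) (d : ℝ) :
    iteratedDeriv 2 (fun t : ℝ => exp (-‖u + t • v‖ ^ 2 / (2 * d ^ 2))) 0
      ≤ 2 * ‖v‖ ^ 2 / (d ^ 2 * exp (3 / 2)) := by
  set s := ‖u‖ ^ 2 / d ^ 2
  have hcauchySchwarz : ⟪u, v⟫ ^ 2 ≤ ‖u‖ ^ 2 * ‖v‖ ^ 2 := by
    simpa only [sq, real_inner_self_eq_norm_mul_norm, mul_mul_mul_comm]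
      using real_inner_mul_inner_self_le u v
  have hcoeff : ⟪u, v⟫ ^ 2 / d ^ 4 - ‖v‖ ^ 2 / d ^ 2 ≤ ‖v‖ ^ 2 * (s - 1) / d ^ 2 :=
    calc ⟪u, v⟫ ^ 2 / d ^ 4 - ‖v‖ ^ 2 / d ^ 2 ≤ ‖u‖ ^ 2 * ‖v‖ ^ 2 / d ^ 4 - ‖v‖ ^ 2 / d ^ 2 := by
          gcongr
      _ = ‖v‖ ^ 2 * (s - 1) / d ^ 2 := by ring
  rw [iteratedDeriv_two_gaussian_line_zero]
  calc exp (-‖u‖ ^ 2 / (2 * d ^ 2)) * (⟪u, v⟫ ^ 2 / d ^ 4 - ‖v‖ ^ 2 / d ^ 2)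
      ≤ exp (-s / 2) * (‖v‖ ^ 2 * (s - 1) / d ^ 2) := by
        rw [show -‖u‖ ^ 2 / (2 * d ^ 2) = -s / 2 by ring]
        gcongr
    _ = ‖v‖ ^ 2 / d ^ 2 * ((s - 1) * exp (-s / 2)) := by ring
    _ ≤ ‖v‖ ^ 2 / d ^ 2 * (2 / exp (3 / 2)) := by gcongr; exact sub_one_mul_exp_neg_half_le s
    _ = 2 * ‖v‖ ^ 2 / (d ^ 2 * exp (3 / 2)) := by ring

end InnerProductSpace

/-- Second-derivative bound for the radial basis function `G(x) = exp(−‖x − m‖²/(2d²))`: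
for every `x` and every unit vector `v`, the second derivative at `t = 0` of
`t ↦ G(x + t·v)` is at most `2/(d²·e^{3/2})`; moreover `2/(d²·e^{3/2}) < 1/(2d²)`. -/
theorem rbf_second_derivative_bound (n : ℕ) (d : ℝ) (hd : 0 < d)
    (m : EuclideanSpace ℝ (Fin n)) (G : EuclideanSpace ℝ (Fin n) → ℝ)
    (hG : ∀ x, G x = Real.exp (-‖x - m‖ ^ 2 / (2 * d ^ 2)))
    (x v : EuclideanSpace ℝ (Fin n)) (hv : ‖v‖ = 1) :
    iteratedDeriv 2 (fun t : ℝ => G (x + t • v)) 0 ≤ 2 / (d ^ 2 * Real.exp (3 / 2)) ∧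
      2 / (d ^ 2 * Real.exp (3 / 2)) < 1 / (2 * d ^ 2) := by
  have hline : (fun t : ℝ => G (x + t • v))
      = fun t : ℝ => exp (-‖(x - m) + t • v‖ ^ 2 / (2 * d ^ 2)) := by
    funext t
    rw [hG, add_sub_right_comm]
  refine ⟨?_, ?_⟩
  · rw [hline]
    simpa only [hv, one_pow, mul_one] using iteratedDeriv_two_gaussian_line_zero_le (x - m) v d
  · rw [div_lt_div_iff₀ (by positivity) (by positivity)]
    nlinarith [four_lt_exp_three_halves, pow_pos hd 2]
end
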